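/- For all 0 ≤ k ≤ r and n ≥ 0, the higher-order degenerate Changhee polynomials of the second kind satisfy the convolution identity Ch^{(r)}_{n,λ}(x) = Σ_{l=0}^{n} C(n,l) · Ch^{(k)}_{l,λ} · Ch^{(r-k)}_{n-l,λ}(x), where Ch^{(k)}_{l,λ} = Ch^{(k)}_{l,λ}(0). -/

import Mathlib

/-!
Substituting `log(1+t)` into an exponential generating function is a ring homomorphism, and it
sends the EGF of a sequence `a` to the EGF of its Stirling transform `n ↦ Σₘ S₁(n,m) aₘ`,
because `log(1+t)ᵐ/m! = Σₙ S₁(n,m) tⁿ/n!` (the ODE `(1+t) d/dt log(1+t)ᵐ⁺¹ = (m+1) log(1+t)ᵐ`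
is the Stirling recurrence). Since `B_0 = 1`, the defining relation of the degenerate Euler
polynomials factors their EGF as `EGF(E⁽ʳ⁾(x)) = EGF(E⁽ᵏ⁾(0)) · EGF(E⁽ʳ⁻ᵏ⁾(x))`. Substituting
`log(1+t)` and reading off coefficients of the product of EGFs, a binomial convolution, gives
the identity.
-/

open Finset PowerSeries

/-- The degenerate falling factorial `(x)_{n,λ}`. -/
noncomputable def df (l x : ℚ) (n : ℕ) : ℚ := ∏ i ∈ Finset.range n, (x - (i : ℚ) * l)

/-- The formal power series `(1+λt)^{x/λ} := Σ (x)_{n,λ} tⁿ/n!`. -/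
noncomputable def B (l x : ℚ) : PowerSeries ℚ :=
  PowerSeries.mk fun n => df l x n / n.factorial

/-- Signed Stirling numbers of the first kind. -/
def S1 : ℕ → ℕ → ℚ
  | 0, 0 => 1
  | 0, _ + 1 => 0
  | _ + 1, 0 => 0
  | n + 1, k + 1 => S1 n k - (n : ℚ) * S1 n (k + 1)

/-- Stirling numbers of the second kind. -/
def S2 : ℕ → ℕ → ℚ
  | 0, 0 => 1
  | 0, _ + 1 => 0
  | _ + 1, 0 => 0
  | n + 1, k + 1 => ((k : ℚ) + 1) * S2 n (k + 1) + S2 n k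

noncomputable def egf (a : ℕ → ℚ) : ℚ⟦X⟧ := mk fun n => a n / n.factorial

def stirlingFirstTransform (a : ℕ → ℚ) (n : ℕ) : ℚ := ∑ m ∈ range (n + 1), S1 n m * a m

def binomialConvolution (a b : ℕ → ℚ) (n : ℕ) : ℚ :=
  ∑ j ∈ range (n + 1), n.choose j * a j * b (n - j)

theorem egf_injective : Function.Injective egf := by
  intro a b h
  funext n
  simpa [egf, Nat.factorial_ne_zero] using congrArg (coeff n) h

theorem egf_mul (a b : ℕ → ℚ) : egf a * egf b = egf (binomialConvolution a b) := by
  ext n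
  rw [coeff_mul, Nat.sum_antidiagonal_eq_sum_range_succ_mk]
  simp only [egf, coeff_mk, binomialConvolution, sum_div]
  refine sum_congr rfl fun j hj => ?_
  have hjn : j ≤ n := Nat.lt_succ_iff.mp (mem_range.mp hj)
  rw [Nat.cast_choose ℚ hjn]
  field_simp

theorem one_add_X_mul_derivative_log : (1 + X) * d⁄dX ℚ (log ℚ) = 1 := by
  ext n
  rw [deriv_log, add_mul, one_mul, map_add]
  cases n with
  | zero => simp
  | succ n => simp [coeff_succ_X_mul, pow_succ]

theorem one_add_X_mul_derivative_log_pow (m : ℕ) :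
    (1 + X) * d⁄dX ℚ (log ℚ ^ (m + 1)) = (m + 1) • log ℚ ^ m := by
  rw [Derivation.leibniz_pow, add_tsub_cancel_right, smul_eq_mul, mul_smul_comm, mul_left_comm,
    one_add_X_mul_derivative_log, mul_one]

theorem coeff_log_pow_succ_succ (n m : ℕ) :
    (n + 1) * coeff (n + 1) (log ℚ ^ (m + 1)) + n * coeff n (log ℚ ^ (m + 1))
      = (m + 1) * coeff n (log ℚ ^ m) := by
  have h := congrArg (coeff n) (one_add_X_mul_derivative_log_pow m)
  rw [add_mul, one_mul, map_add, map_nsmul, nsmul_eq_mul, coeff_derivative] at h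
  push_cast at h
  rw [← h]
  cases n with
  | zero => simp
  | succ n =>
    rw [coeff_succ_X_mul, coeff_derivative]
    push_cast
    ring

theorem coeff_log_pow (n m : ℕ) :
    coeff n (log ℚ ^ m) = S1 n m * m.factorial / n.factorial := by
  induction n generalizing m with
  | zero =>
    cases m with
    | zero => simp [S1]
    | succ m => simp [S1, coeff_zero_eq_constantCoeff]
  | succ n ih =>
    cases m with
    | zero => simp [S1, coeff_one]
    | succ m =>
      have h := coeff_log_pow_succ_succ n m
      rw [ih, ih, Nat.factorial_succ] at h
      push_cast at h
      field_simp at h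
      simp only [S1, Nat.factorial_succ]
      push_cast
      field_simp
      linear_combination h

theorem coeff_log_pow_eq_zero_of_lt {n m : ℕ} (h : n < m) : coeff n (log ℚ ^ m) = 0 :=
  X_pow_dvd_iff.mp (pow_dvd_pow_of_dvd (X_dvd_iff.mpr constantCoeff_log) m) n h

theorem egf_stirlingFirstTransform (a : ℕ → ℚ) :
    egf (stirlingFirstTransform a) = (egf a).subst (log ℚ) := by
  ext n
  rw [coeff_subst' HasSubst.log, finsum_eq_sum_of_support_subset (s := range (n + 1))]
  · simp only [egf, coeff_mk, stirlingFirstTransform, sum_div, coeff_log_pow, smul_eq_mul]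
    refine sum_congr rfl fun m _ => ?_
    field_simp
  · intro m hm
    by_contra hmn
    exact hm (smul_eq_zero_of_right _ (coeff_log_pow_eq_zero_of_lt (by simpa using hmn)))

theorem B_zero (l : ℚ) : B l 0 = 1 := by
  ext n
  cases n with
  | zero => simp [B, df]
  | succ n => simp [B, df, prod_range_succ']

theorem B_one_add_one_ne_zero (l : ℚ) : B l 1 + 1 ≠ 0 := fun h => by
  simpa [B, df] using congrArg constantCoeff h

theorem egf_euler_eq_mul (l : ℚ) (E : ℕ → ℕ → ℚ → ℚ)
    (hE : ∀ (r : ℕ) (x : ℚ), egf (E r · x) * (B l 1 + 1) ^ r = 2 ^ r * B l x)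
    {k r : ℕ} (hk : k ≤ r) (x : ℚ) :
    egf (E r · x) = egf (E k · 0) * egf (E (r - k) · x) := by
  refine mul_right_cancel₀ (pow_ne_zero r (B_one_add_one_ne_zero l)) ?_
  obtain ⟨s, rfl⟩ := Nat.exists_eq_add_of_le hk
  rw [add_tsub_cancel_left]
  calc egf (E (k + s) · x) * (B l 1 + 1) ^ (k + s)
      = (egf (E k · 0) * (B l 1 + 1) ^ k) * (egf (E s · x) * (B l 1 + 1) ^ s) := by
        rw [hE, hE, hE, B_zero]; ring
    _ = egf (E k · 0) * egf (E s · x) * (B l 1 + 1) ^ (k + s) := by ring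

/-- Convolution identity for higher-order degenerate Changhee polynomials of the second
kind: for `0 ≤ k ≤ r`, `Ch⁽ʳ⁾_{n,λ}(x) = Σ_{l≤n} C(n,l) Ch⁽ᵏ⁾_{l,λ} Ch⁽ʳ⁻ᵏ⁾_{n-l,λ}(x)`.
Here `E r n x` are the order-r degenerate Euler polynomials (for all orders `r ≥ 0`, with
`E⁽⁰⁾_{n,λ}(x) = (x)_{n,λ}`), and `Ch⁽ʳ⁾_{n,λ}(x) = Σ_{m≤n} S₁(n,m) E⁽ʳ⁾_{m,λ}(x)`. -/
theorem stmt15 (l : ℚ) (E : ℕ → ℕ → ℚ → ℚ)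
    (hE : ∀ (r : ℕ) (x : ℚ),
      (PowerSeries.mk fun n => E r n x / n.factorial) * (B l 1 + 1) ^ r
        = 2 ^ r * B l x) :
    ∀ k r : ℕ, k ≤ r → ∀ (n : ℕ) (x : ℚ),
      (∑ m ∈ Finset.range (n + 1), S1 n m * E r m x)
        = ∑ j ∈ Finset.range (n + 1), (n.choose j : ℚ) *
            (∑ m ∈ Finset.range (j + 1), S1 j m * E k m 0) *
            (∑ m ∈ Finset.range (n - j + 1), S1 (n - j) m * E (r - k) m x) := by
  intro k r hk n x
  have h := congrArg (subst (log ℚ)) (egf_euler_eq_mul l E hE hk x)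
  rw [subst_mul HasSubst.log, ← egf_stirlingFirstTransform, ← egf_stirlingFirstTransform,
    ← egf_stirlingFirstTransform, egf_mul] at h
  exact congrFun (egf_injective h) n
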